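/- arXiv:2410.24062 — 6 statements merged into one kernel-verified Lean document; each statement's English description precedes it below -/
import Mathlib

section
/- Every HT game is superadditive: for all disjoint coalitions S, T ⊆ N, v(S ∪ T) ≥ v(S) + v(T). -/
open Finset

noncomputable def HTv {ι : Type*} (p : ℝ) (c K Q : ι → ℝ) (S : Finset ι) : ℝ :=
  if hS : S.Nonempty then (p - S.inf' hS c) * min (∑ i ∈ S, K i) (∑ i ∈ S, Q i) else 0

/-- Every HT game is superadditive. -/
theorem HTv_superadditive {n : ℕ} (p : ℝ) (c K Q : Fin n → ℝ)
    (hp : 0 < p) (hK : ∀ i, 0 ≤ K i) (hQ : ∀ i, 0 ≤ Q i) (hc : ∀ i, c i < p) :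
    ∀ S T : Finset (Fin n), Disjoint S T →
      HTv p c K Q S + HTv p c K Q T ≤ HTv p c K Q (S ∪ T) := by
  intro S T hST
  rcases S.eq_empty_or_nonempty with rfl | hS
  · simp [HTv]
  rcases T.eq_empty_or_nonempty with rfl | hT
  · simp [HTv]
  have hUn : (S ∪ T).Nonempty := hS.mono subset_union_left
  rw [HTv, HTv, HTv, dif_pos hS, dif_pos hT, dif_pos hUn]
  have hsK : ∑ i ∈ S ∪ T, K i = ∑ i ∈ S, K i + ∑ i ∈ T, K i := Finset.sum_union hST
  have hsQ : ∑ i ∈ S ∪ T, Q i = ∑ i ∈ S, Q i + ∑ i ∈ T, Q i := Finset.sum_union hST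
  rw [hsK, hsQ]
  have hinf : (S ∪ T).inf' hUn c = min (S.inf' hS c) (T.inf' hT c) := by
    rw [Finset.inf'_union hS hT]
  rw [hinf]
  set cS := S.inf' hS c
  set cT := T.inf' hT c
  set KS := ∑ i ∈ S, K i
  set KT := ∑ i ∈ T, K i
  set QS := ∑ i ∈ S, Q i
  set QT := ∑ i ∈ T, Q i
  have hcS : cS < p := by
    obtain ⟨i, hi, hie⟩ := S.exists_mem_eq_inf' hS c
    exact lt_of_eq_of_lt hie (hc i)
  have hcT : cT < p := by
    obtain ⟨i, hi, hie⟩ := T.exists_mem_eq_inf' hT c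
    exact lt_of_eq_of_lt hie (hc i)
  have hKS : 0 ≤ KS := Finset.sum_nonneg fun i _ => hK i
  have hKT : 0 ≤ KT := Finset.sum_nonneg fun i _ => hK i
  have hQS : 0 ≤ QS := Finset.sum_nonneg fun i _ => hQ i
  have hQT : 0 ≤ QT := Finset.sum_nonneg fun i _ => hQ i
  have hmS : 0 ≤ min KS QS := le_min hKS hQS
  have hmT : 0 ≤ min KT QT := le_min hKT hQT
  have h1 : min cS cT ≤ cS := min_le_left _ _
  have h2 : min cS cT ≤ cT := min_le_right _ _
  have hm : min KS QS + min KT QT ≤ min (KS + KT) (QS + QT) :=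
    le_min (add_le_add (min_le_left _ _) (min_le_left _ _))
      (add_le_add (min_le_right _ _) (min_le_right _ _))
  have hpm : 0 ≤ p - min cS cT := by
    rcases min_cases cS cT with ⟨h, _⟩ | ⟨h, _⟩ <;> rw [h] <;> linarith
  calc (p - cS) * min KS QS + (p - cT) * min KT QT
      ≤ (p - min cS cT) * min KS QS + (p - min cS cT) * min KT QT := by
        apply add_le_add <;> apply mul_le_mul_of_nonneg_right <;> [linarith; exact hmS; linarith; exact hmT]
    _ = (p - min cS cT) * (min KS QS + min KT QT) := by ring
    _ ≤ (p - min cS cT) * min (KS + KT) (QS + QT) := by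
        exact mul_le_mul_of_nonneg_left hm hpm
end

section
/- In an HT game, if K_N ≤ Q_N, the collaborative allocation γ defined by γ_i := (p - c_N)·K_i belongs to the core: it is efficient (Σ_{i∈N} γ_i = v(N)) and coalitionally stable (Σ_{i∈S} γ_i ≥ v(S) for all S ⊆ N). -/
open Finset

/-- if K_N ≤ Q_N, the CO allocation γ_i = (p - c_N)·K_i is in the core. -/
theorem CO_mem_core_of_K_le_Q {n : ℕ} [NeZero n] (p : ℝ) (c K Q : Fin n → ℝ)
    (hp : 0 < p) (hK : ∀ i, 0 ≤ K i) (hQ : ∀ i, 0 ≤ Q i) (hc : ∀ i, c i < p)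
    (hKQ : ∑ i, K i ≤ ∑ i, Q i)
    (γ : Fin n → ℝ)
    (hγ : ∀ i, γ i = (p - Finset.univ.inf' Finset.univ_nonempty c) * K i) :
    (∑ i, γ i = HTv p c K Q Finset.univ) ∧
      (∀ S : Finset (Fin n), HTv p c K Q S ≤ ∑ i ∈ S, γ i) := by
  have hne : (Finset.univ : Finset (Fin n)).Nonempty := Finset.univ_nonempty
  constructor
  · rw [HTv, dif_pos hne, min_eq_left hKQ]
    simp only [hγ]
    rw [← Finset.mul_sum]
  · intro S
    rw [HTv]
    split_ifs with hS
    · calc (p - S.inf' hS c) * min (∑ i ∈ S, K i) (∑ i ∈ S, Q i)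
          ≤ (p - Finset.univ.inf' hne c) * (∑ i ∈ S, K i) := by
            apply mul_le_mul
            · have : Finset.univ.inf' hne c ≤ S.inf' hS c := by
                obtain ⟨j, hj, hjc⟩ := Finset.exists_mem_eq_inf' hS c
                rw [hjc]; exact Finset.inf'_le c (Finset.mem_univ j)
              linarith
            · exact min_le_left _ _
            · exact le_min (Finset.sum_nonneg fun i _ => hK i)
                (Finset.sum_nonneg fun i _ => hQ i)
            · obtain ⟨i, hi, hic⟩ := Finset.exists_mem_eq_inf' hne c
              rw [hic]; linarith [hc i]
        _ = ∑ i ∈ S, γ i := by rw [Finset.mul_sum]; exact Finset.sum_congr rfl fun i _ => (hγ i).symm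
    · exact Finset.sum_nonneg fun i _ => by
        rw [hγ]
        obtain ⟨j, hj, hjc⟩ := Finset.exists_mem_eq_inf' hne c
        have : 0 < p - Finset.univ.inf' hne c := by rw [hjc]; linarith [hc j]
        exact mul_nonneg this.le (hK _)
end

section
/- In an HT game, if K_N > Q_N, the collaborative allocation γ defined by γ_i := (p - c_N)·Q_i belongs to the core of (N, v). -/
open Finset

/-- if K_N > Q_N, the CO allocation γ_i = (p - c_N)·Q_i is in the core. -/
theorem CO_mem_core_of_Q_lt_K {n : ℕ} [NeZero n] (p : ℝ) (c K Q : Fin n → ℝ)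
    (hp : 0 < p) (hK : ∀ i, 0 ≤ K i) (hQ : ∀ i, 0 ≤ Q i) (hc : ∀ i, c i < p)
    (hKQ : ∑ i, Q i < ∑ i, K i)
    (γ : Fin n → ℝ)
    (hγ : ∀ i, γ i = (p - Finset.univ.inf' Finset.univ_nonempty c) * Q i) :
    (∑ i, γ i = HTv p c K Q Finset.univ) ∧
      (∀ S : Finset (Fin n), HTv p c K Q S ≤ ∑ i ∈ S, γ i) := by
  constructor
  · simp only [HTv, dif_pos Finset.univ_nonempty]
    rw [min_eq_right hKQ.le]
    simp_rw [hγ]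
    rw [← Finset.mul_sum]
  · intro S
    simp_rw [hγ, ← Finset.mul_sum]
    unfold HTv
    split_ifs with hS
    · have hcS : Finset.univ.inf' Finset.univ_nonempty c ≤ S.inf' hS c := by
        obtain ⟨j, hj, hjc⟩ := S.exists_mem_eq_inf' hS c
        rw [hjc]
        exact Finset.inf'_le c (Finset.mem_univ j)
      have hQS : 0 ≤ ∑ i ∈ S, Q i := Finset.sum_nonneg fun i _ => hQ i
      have h1 : (p - S.inf' hS c) * min (∑ i ∈ S, K i) (∑ i ∈ S, Q i)
          ≤ (p - S.inf' hS c) * (∑ i ∈ S, Q i) := by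
        apply mul_le_mul_of_nonneg_left (min_le_right _ _)
        obtain ⟨j, hj, hjc⟩ := S.exists_mem_eq_inf' hS c
        rw [hjc]; linarith [hc j]
      have h2 : (p - S.inf' hS c) * (∑ i ∈ S, Q i)
          ≤ (p - Finset.univ.inf' Finset.univ_nonempty c) * (∑ i ∈ S, Q i) := by
        apply mul_le_mul_of_nonneg_right _ hQS
        linarith
      linarith
    · have hQS : 0 ≤ ∑ i ∈ S, Q i := Finset.sum_nonneg fun i _ => hQ i
      have : 0 ≤ p - Finset.univ.inf' Finset.univ_nonempty c := by
        obtain ⟨j, hj, hjc⟩ := Finset.exists_mem_eq_inf' Finset.univ_nonempty c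
        rw [hjc]; linarith [hc j]
      positivity
end

section
/- Every HT game is balanced (has a nonempty core), and moreover totally balanced: every subgame of an HT game has a nonempty core. -/
open Finset

lemma HTv_key {n : ℕ} (p : ℝ) (c K Q : Fin n → ℝ)
    (hK : ∀ i, 0 ≤ K i) (hQ : ∀ i, 0 ≤ Q i) (hc : ∀ i, c i < p)
    (T : Finset (Fin n)) (hT : T.Nonempty) :
    ∃ x : Fin n → ℝ, ∑ i ∈ T, x i = HTv p c K Q T ∧
      ∀ S ⊆ T, HTv p c K Q S ≤ ∑ i ∈ S, x i := by
  set a := T.inf' hT c with ha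
  have hap : 0 ≤ p - a := by
    obtain ⟨j, hj, hje⟩ := T.exists_mem_eq_inf' hT c
    rw [ha, hje]; linarith [hc j]
  have key : ∀ (f : Fin n → ℝ), (∀ i, 0 ≤ f i) →
      (∀ S : Finset (Fin n), S.Nonempty →
        min (∑ i ∈ S, K i) (∑ i ∈ S, Q i) ≤ ∑ i ∈ S, f i) →
      ∀ S ⊆ T, HTv p c K Q S ≤ ∑ i ∈ S, (p - a) * f i := by
    intro f hf hmin S hST
    rcases S.eq_empty_or_nonempty with rfl | hS
    · simp [HTv]
    · rw [HTv, dif_pos hS, ← mul_sum]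
      have h1 : p - S.inf' hS c ≤ p - a := by
        obtain ⟨j, hj, hje⟩ := S.exists_mem_eq_inf' hS c
        have := T.inf'_le c (hST hj)
        rw [hje]; linarith
      have h2 : 0 ≤ min (∑ i ∈ S, K i) (∑ i ∈ S, Q i) :=
        le_min (Finset.sum_nonneg fun i _ => hK i) (Finset.sum_nonneg fun i _ => hQ i)
      exact mul_le_mul h1 (hmin S hS) h2 hap
  rcases le_total (∑ i ∈ T, K i) (∑ i ∈ T, Q i) with h | h
  · refine ⟨fun i => (p - a) * K i, ?_, ?_⟩
    · rw [← mul_sum, HTv, dif_pos hT, min_eq_left h]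
    · exact key K hK (fun S _ => min_le_left _ _)
  · refine ⟨fun i => (p - a) * Q i, ?_, ?_⟩
    · rw [← mul_sum, HTv, dif_pos hT, min_eq_right h]
    · exact key Q hQ (fun S _ => min_le_right _ _)

/-- HT games are balanced, and moreover totally balanced. -/
theorem HTv_totally_balanced {n : ℕ} (p : ℝ) (c K Q : Fin n → ℝ)
    (hp : 0 < p) (hK : ∀ i, 0 ≤ K i) (hQ : ∀ i, 0 ≤ Q i) (hc : ∀ i, c i < p) :
    (∃ x : Fin n → ℝ, ∑ i, x i = HTv p c K Q Finset.univ ∧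
      ∀ S : Finset (Fin n), HTv p c K Q S ≤ ∑ i ∈ S, x i) ∧
    (∀ T : Finset (Fin n), ∃ x : Fin n → ℝ,
      ∑ i ∈ T, x i = HTv p c K Q T ∧
      ∀ S ⊆ T, HTv p c K Q S ≤ ∑ i ∈ S, x i) := by
  have gen : ∀ T : Finset (Fin n), ∃ x : Fin n → ℝ,
      ∑ i ∈ T, x i = HTv p c K Q T ∧
      ∀ S ⊆ T, HTv p c K Q S ≤ ∑ i ∈ S, x i := by
    intro T
    rcases T.eq_empty_or_nonempty with rfl | hT
    · refine ⟨0, by simp [HTv], fun S hS => ?_⟩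
      rw [Finset.subset_empty.mp hS]; simp [HTv]
    · exact HTv_key p c K Q hK hQ hc T hT
  refine ⟨?_, gen⟩
  obtain ⟨x, hx1, hx2⟩ := gen Finset.univ
  exact ⟨x, hx1, fun S => hx2 S (Finset.subset_univ S)⟩
end

section
/- If S ⊆ M, then the BTC allocation satisfies coalitional rationality on S for all α ≥ 0: Σ_{i∈S} T_i(v,α) ≥ v(S). -/
open Finset

/-- The collaborative (CO) allocation. -/
noncomputable def CO {n : ℕ} [NeZero n] (p : ℝ) (c K Q : Fin n → ℝ) (i : Fin n) : ℝ :=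
  (p - Finset.univ.inf' Finset.univ_nonempty c) *
    (if ∑ j, K j ≤ ∑ j, Q j then K i else Q i)

open scoped Classical in
/-- The set M of players with minimal processing cost. -/
noncomputable def Mset {n : ℕ} (c : Fin n → ℝ) : Finset (Fin n) :=
  Finset.univ.filter (fun i => ∀ j, c i ≤ c j)

open scoped Classical in
/-- The Best Technology Compensation (BTC) allocation. -/
noncomputable def BTC {n : ℕ} [NeZero n] (p : ℝ) (c K Q : Fin n → ℝ) (a : ℝ) (i : Fin n) : ℝ :=
  if i ∈ Mset c then
    CO p c K Q i + (a / (Mset c).card) * ∑ j ∈ (Mset c)ᶜ, CO p c K Q j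
  else CO p c K Q i - a * CO p c K Q i

/-- coalitional rationality of the BTC allocation on coalitions S ⊆ M. -/
theorem BTC_rational_subset_M {n : ℕ} [NeZero n] (p : ℝ) (c K Q : Fin n → ℝ)
    (hp : 0 < p) (hK : ∀ i, 0 ≤ K i) (hQ : ∀ i, 0 ≤ Q i) (hc : ∀ i, c i < p)
    (a : ℝ) (ha : 0 ≤ a) :
    ∀ S : Finset (Fin n), S ⊆ Mset c → HTv p c K Q S ≤ ∑ i ∈ S, BTC p c K Q a i := by
  classical
  intro S hSM
  set m := Finset.univ.inf' Finset.univ_nonempty c with hm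
  have hmle : ∀ j, m ≤ c j := fun j => Finset.inf'_le _ (Finset.mem_univ j)
  have hmlt : m < p := by
    obtain ⟨i, _, hi⟩ := Finset.exists_mem_eq_inf' (Finset.univ_nonempty (α := Fin n)) c
    rw [hm, hi]; exact hc i
  have hmnn : 0 ≤ p - m := le_of_lt (by linarith)
  have hCOnn : ∀ j, 0 ≤ CO p c K Q j := by
    intro j
    unfold CO
    apply mul_nonneg hmnn
    split <;> [exact hK j; exact hQ j]
  have hterm : 0 ≤ (a / (Mset c).card) * ∑ j ∈ (Mset c)ᶜ, CO p c K Q j := by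
    apply mul_nonneg (div_nonneg ha (Nat.cast_nonneg _))
    exact Finset.sum_nonneg fun j _ => hCOnn j
  have hBTC : ∀ i ∈ S, CO p c K Q i ≤ BTC p c K Q a i := by
    intro i hi
    unfold BTC
    rw [if_pos (hSM hi)]
    linarith
  have hsum : ∑ i ∈ S, CO p c K Q i ≤ ∑ i ∈ S, BTC p c K Q a i :=
    Finset.sum_le_sum hBTC
  refine le_trans ?_ hsum
  unfold HTv
  split
  · next hS =>
    have hinfS : S.inf' hS c = m := by
      obtain ⟨i, hiS, hi⟩ := Finset.exists_mem_eq_inf' hS c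
      have hiM := hSM hiS
      simp only [Mset, Finset.mem_filter] at hiM
      rw [hi]
      obtain ⟨i0, _, hi0⟩ := Finset.exists_mem_eq_inf' (Finset.univ_nonempty (α := Fin n)) c
      refine le_antisymm ?_ (hmle i)
      rw [hm, hi0]
      exact hiM.2 i0
    rw [hinfS]
    unfold CO
    rw [← Finset.mul_sum]
    apply mul_le_mul_of_nonneg_left _ hmnn
    split
    · exact min_le_of_left_le le_rfl
    · exact min_le_of_right_le le_rfl
  · exact Finset.sum_nonneg fun i _ => hCOnn i
end

section
/- Let ᾱ and β̄ be the core-membership thresholds for the BTC and CRC allocations (so T(v,α) is in the core iff 0 ≤ α ≤ ᾱ and R(v,β) is in the core iff 0 ≤ β ≤ β̄). Then for any 0 ≤ α* ≤ ᾱ/2 and 0 ≤ β* ≤ β̄/2, the HTR allocation HTR(v,α*,β*) := T(v,α*) + R(v,β*) − γ(v) belongs to the core of the HT game. -/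
open Finset

open scoped Classical in
/-- The set E of players with Q_i = K_i. -/
noncomputable def Eset {n : ℕ} (K Q : Fin n → ℝ) : Finset (Fin n) :=
  Finset.univ.filter (fun i => Q i = K i)

open scoped Classical in
/-- The set H of players to be compensated by the CRC allocation. -/
noncomputable def Hset {n : ℕ} (K Q : Fin n → ℝ) : Finset (Fin n) :=
  if ∑ j, K j ≤ ∑ j, Q j then Finset.univ.filter (fun i => K i < Q i)
  else Finset.univ.filter (fun i => Q i < K i)

open scoped Classical in
/-- The Crop Reward Compensation (CRC) allocation. -/
noncomputable def CRC {n : ℕ} [NeZero n] (p : ℝ) (c K Q : Fin n → ℝ) (b : ℝ) (i : Fin n) : ℝ :=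
  if i ∈ Hset K Q then
    CO p c K Q i + ((Q i - K i) / (∑ j ∈ Hset K Q, Q j - ∑ j ∈ Hset K Q, K j)) * b *
      ∑ j ∈ (Hset K Q)ᶜ, CO p c K Q j
  else if i ∈ Eset K Q then CO p c K Q i
  else CO p c K Q i - b * CO p c K Q i

lemma HTR_pointwise {n : ℕ} [NeZero n] (p : ℝ) (c K Q : Fin n → ℝ) (a b : ℝ) (i : Fin n) :
    BTC p c K Q a i + CRC p c K Q b i - CO p c K Q i
      = (BTC p c K Q (2*a) i + CRC p c K Q (2*b) i) / 2 := by
  classical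
  unfold BTC CRC
  split_ifs <;> ring

/-- if ᾱ and β̄ are the core-membership thresholds of the BTC and CRC
allocations, then for any 0 ≤ α* ≤ ᾱ/2 and 0 ≤ β* ≤ β̄/2 the HTR allocation
HTR = T(v,α*) + R(v,β*) − γ(v) belongs to the core. -/
theorem HTR_mem_core {n : ℕ} [NeZero n] (p : ℝ) (c K Q : Fin n → ℝ)
    (hp : 0 < p) (hK : ∀ i, 0 ≤ K i) (hQ : ∀ i, 0 ≤ Q i) (hc : ∀ i, c i < p)
    (hE : Eset K Q ≠ Finset.univ)
    (abar bbar : ℝ)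
    (habar : ∀ a : ℝ,
      ((∑ i, BTC p c K Q a i = HTv p c K Q Finset.univ) ∧
        ∀ S : Finset (Fin n), HTv p c K Q S ≤ ∑ i ∈ S, BTC p c K Q a i) ↔
      (0 ≤ a ∧ a ≤ abar))
    (hbbar : ∀ b : ℝ,
      ((∑ i, CRC p c K Q b i = HTv p c K Q Finset.univ) ∧
        ∀ S : Finset (Fin n), HTv p c K Q S ≤ ∑ i ∈ S, CRC p c K Q b i) ↔
      (0 ≤ b ∧ b ≤ bbar))
    (a b : ℝ) (ha0 : 0 ≤ a) (ha : a ≤ abar / 2) (hb0 : 0 ≤ b) (hb : b ≤ bbar / 2) :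
    (∑ i, (BTC p c K Q a i + CRC p c K Q b i - CO p c K Q i) = HTv p c K Q Finset.univ) ∧
      (∀ S : Finset (Fin n),
        HTv p c K Q S ≤ ∑ i ∈ S, (BTC p c K Q a i + CRC p c K Q b i - CO p c K Q i)) := by
  have hA := (habar (2*a)).mpr ⟨by linarith, by linarith⟩
  have hB := (hbbar (2*b)).mpr ⟨by linarith, by linarith⟩
  have hsum : ∀ S : Finset (Fin n),
      ∑ i ∈ S, (BTC p c K Q a i + CRC p c K Q b i - CO p c K Q i)
        = (∑ i ∈ S, BTC p c K Q (2*a) i + ∑ i ∈ S, CRC p c K Q (2*b) i) / 2 := by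
    intro S
    simp_rw [HTR_pointwise]
    rw [← Finset.sum_add_distrib, Finset.sum_div]
  constructor
  · rw [hsum, hA.1, hB.1]; ring
  · intro S
    rw [hsum]
    have h1 := hA.2 S
    have h2 := hB.2 S
    linarith
end
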